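/- arXiv:1609.07356 — 2 statements merged into one kernel-verified Lean document; each statement's English description precedes it below -/
import Mathlib

section
/- The homotopy c satisfies c ∘ c = 0, c(e) = 0 for every basis element e ∈ B_d (all d ≥ 0), and c preserves the ℕⁿ-multidegree, where the multidegree of x^α[σ|τ] is α + Σ_{i∈σ∪τ} e_i ∈ ℕⁿ (e_i the i-th standard basis vector). -/
open Classical MvPolynomial Finsupp TensorProduct

set_option maxHeartbeats 1600000

noncomputable section

namespace EdgeRes

/-- A "cell" `(σ, τ)`: a pair of finite sets of vertices, representing the symbol `[σ|τ]`. -/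
abbrev Cell (n : ℕ) := Finset (Fin n) × Finset (Fin n)

/-- The cointerval graph of the intervals `[a i, b i]`: distinct vertices are adjacent
iff the corresponding closed intervals are disjoint. -/
def cigraph (n : ℕ) (a b : Fin n → ℝ) : SimpleGraph (Fin n) where
  Adj i j := i ≠ j ∧ Disjoint (Set.Icc (a i) (b i)) (Set.Icc (a j) (b j))
  symm := by constructor; intro i j h; exact ⟨h.1.symm, h.2.symm⟩
  loopless := by constructor; intro i h; exact h.1 rfl

variable {n : ℕ}

/-- The homological degree of a cell: `|σ| + |τ| - 1`. -/
def cellDeg (e : Cell n) : ℕ := e.1.card + e.2.card - 1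

/-- `e = (σ, τ)` is a basis cell: either the degree-0 cell `(∅, ∅)` (representing `1 ∈ B₀`),
or `σ, τ` are disjoint and nonempty, `max σ < min τ`, and every `i ∈ σ` is adjacent
to `min τ` in `G`. -/
def IsBasisCell (G : SimpleGraph (Fin n)) (e : Cell n) : Prop :=
  e = (∅, ∅) ∨
  (e.1.Nonempty ∧ e.2.Nonempty ∧ Disjoint e.1 e.2 ∧
   (∀ i ∈ e.1, ∀ j ∈ e.2, i < j) ∧
   (∀ i ∈ e.1, ∀ j ∈ e.2, (∀ j' ∈ e.2, j ≤ j') → G.Adj i j))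

/-- `e ∈ B_d`. -/
def InB (G : SimpleGraph (Fin n)) (d : ℕ) (e : Cell n) : Prop :=
  IsBasisCell G e ∧ cellDeg e = d

/-- The underlying module of the resolution: the free `S`-module on all cells (the
resolution `F` is the submodule family spanned by the basis cells of each degree). -/
abbrev Ftot (n : ℕ) (k : Type) [Field k] := Cell n →₀ MvPolynomial (Fin n) k

variable (G : SimpleGraph (Fin n)) (k : Type) [Field k]

/-- The basis vector corresponding to a cell, where symbols that are not genuine
basis elements are interpreted as `0`. -/
def sym (e : Cell n) : Ftot n k :=
  if IsBasisCell G e then Finsupp.single e 1 else 0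

/-- The differential on a basis cell: `d[{i}|{j}] = x_i x_j`, and for `|σ|+|τ| ≥ 3`,
`d[σ|τ] = Σ_{i∈σ} (−1)^{|τ|+|{j∈σ : j>i}|} x_i [σ∖i|τ] + Σ_{i∈τ} (−1)^{|{j∈τ : j>i}|} x_i [σ|τ∖i]`. -/
def diffCell (e : Cell n) : Ftot n k :=
  if IsBasisCell G e then
    if e.1.card + e.2.card = 2 then
      (∏ i ∈ e.1 ∪ e.2, (X i : MvPolynomial (Fin n) k)) • sym G k ((∅, ∅) : Cell n)
    else if 3 ≤ e.1.card + e.2.card then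
      (∑ i ∈ e.1,
        (((-1 : MvPolynomial (Fin n) k) ^ (e.2.card + (e.1.filter fun j => i < j).card)) * X i) •
          sym G k (e.1.erase i, e.2))
      + (∑ i ∈ e.2,
        (((-1 : MvPolynomial (Fin n) k) ^ ((e.2.filter fun j => i < j).card)) * X i) •
          sym G k (e.1, e.2.erase i))
    else 0
  else 0

/-- The differential, as an `S`-linear endomorphism of the total module (it is zero in
degree `0` and on non-basis cells). -/
def Dmap : Ftot n k →ₗ[MvPolynomial (Fin n) k] Ftot n k :=
  Finsupp.lsum ℕ fun e => LinearMap.smulRight LinearMap.id (diffCell G k e)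

/-- The submodule `F_d`: the span of the basis cells in `B_d`.  (`F` is the direct sum of
these, and `F_0 = S·[∅|∅] ≅ S`.) -/
def Fsub (d : ℕ) : Submodule (MvPolynomial (Fin n) k) (Ftot n k) :=
  Submodule.span _ {f : Ftot n k | ∃ e : Cell n, InB G d e ∧ f = Finsupp.single e 1}

/-- The edge ideal `I_G`, generated by the `x_i x_j` for edges `ij` of `G`. -/
def edgeIdeal : Ideal (MvPolynomial (Fin n) k) :=
  Ideal.span {m | ∃ i j : Fin n, G.Adj i j ∧ m = X i * X j}

/-- The irrelevant maximal ideal `(x_1, …, x_n)`. -/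
def irrIdeal (n : ℕ) (k : Type) [Field k] : Ideal (MvPolynomial (Fin n) k) :=
  Ideal.span (Set.range fun i : Fin n => (X i : MvPolynomial (Fin n) k))

/-- The set of pairs `(i, j)` with `i < j`, `ij ∈ E(G)`, and `x_i x_j ∣ x^α`; i.e. the
elements `[{i}|{j}]` of `B₁` whose monomial divides `x^α`. -/
def DvdSet (α : Fin n →₀ ℕ) : Finset (Fin n × Fin n) :=
  Finset.univ.filter fun p => p.1 < p.2 ∧ G.Adj p.1 p.2 ∧ 1 ≤ α p.1 ∧ 1 ≤ α p.2

/-- `c` on a monomial `x^α ∈ F_0 = S`: zero if `x^α ∉ I_G`; otherwise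
`(x^α/(x_i x_j))·[{i}|{j}]` for the `≺`-minimal `[{i}|{j}] ∈ B₁` with `x_i x_j ∣ x^α`
(i.e. `j` is largest possible and then `i` smallest possible). -/
def cZero (α : Fin n →₀ ℕ) : Ftot n k :=
  if h : (DvdSet G α).Nonempty then
    let t := ((DvdSet G α).image Prod.snd).max' (h.image _)
    if h2 : ((((DvdSet G α).filter fun p => p.2 = t)).image Prod.fst).Nonempty then
      let s := ((((DvdSet G α).filter fun p => p.2 = t)).image Prod.fst).min' h2
      (monomial (α - Finsupp.single s 1 - Finsupp.single t 1) (1 : k)) • sym G k ({s}, {t})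
    else 0
  else 0

/-- `C₁ = {i ∈ supp α : i > max τ}`. -/
def C1set (τ : Finset (Fin n)) (α : Fin n →₀ ℕ) : Finset (Fin n) :=
  α.support.filter fun i => ∀ j ∈ τ, j < i

/-- `C₂ = {i ∈ supp α : i < min σ, {i, min τ} ∈ E(G)}`. -/
def C2set (σ τ : Finset (Fin n)) (α : Fin n →₀ ℕ) : Finset (Fin n) :=
  α.support.filter fun i =>
    (∀ s ∈ σ, i < s) ∧ ∀ j ∈ τ, (∀ j' ∈ τ, j ≤ j') → G.Adj i j

/-- `C₃ = {i ∈ supp α : i < min σ, i < max supp α, {i, max supp α} ∈ E(G)}`. -/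
def C3set (σ : Finset (Fin n)) (α : Fin n →₀ ℕ) : Finset (Fin n) :=
  α.support.filter fun i =>
    (∀ s ∈ σ, i < s) ∧ ∀ m ∈ α.support, (∀ m' ∈ α.support, m' ≤ m) → (i < m ∧ G.Adj i m)

/-- The value of the contracting homotopy `c` on the `k`-basis vector `x^α·e`. -/
def cMono (e : Cell n) (α : Fin n →₀ ℕ) : Ftot n k :=
  if IsBasisCell G e then
    if hτ : e.2.Nonempty then
      if e.2.card = 1 then
        -- `τ = {t}`
        let t := e.2.max' hτ
        if h1 : (C1set e.2 α).Nonempty then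
          let m1 := (C1set e.2 α).max' h1
          (monomial (α - Finsupp.single m1 1) (1 : k)) • sym G k (e.1, insert m1 e.2)
          + (if h3 : (C3set G e.1 α).Nonempty then
              let m3 := (C3set G e.1 α).min' h3
              ((-1 : MvPolynomial (Fin n) k) ^ (e.1.card + 1)) •
                ((monomial (α + Finsupp.single t 1 - Finsupp.single m1 1 - Finsupp.single m3 1)
                    (1 : k)) • sym G k (insert m3 e.1, ({m1} : Finset (Fin n))))
            else 0)
        else
          if h2 : (C2set G e.1 e.2 α).Nonempty then
            let m2 := (C2set G e.1 e.2 α).min' h2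
            ((-1 : MvPolynomial (Fin n) k) ^ (e.1.card + 1)) •
              ((monomial (α - Finsupp.single m2 1) (1 : k)) • sym G k (insert m2 e.1, e.2))
          else 0
      else
        -- `|τ| ≥ 2`
        if h1 : (C1set e.2 α).Nonempty then
          let m1 := (C1set e.2 α).max' h1
          (monomial (α - Finsupp.single m1 1) (1 : k)) • sym G k (e.1, insert m1 e.2)
        else 0
    else cZero G k α  -- the degree-0 basis cell `(∅, ∅)`
  else 0

/-- The `k`-basis of the total module, indexed by pairs (cell, monomial exponent). -/
def FBasis (n : ℕ) (k : Type) [Field k] :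
    Module.Basis ((_ : Cell n) × (Fin n →₀ ℕ)) k (Ftot n k) :=
  Finsupp.basis fun _ => MvPolynomial.basisMonomials (Fin n) k

/-- The contracting homotopy `c`, as a `k`-linear endomorphism of the total module. -/
def Cmap : Ftot n k →ₗ[k] Ftot n k :=
  (FBasis n k).constr ℕ fun p => cMono G k p.1 p.2

/-- The `S`-bilinear extension of a map defined on pairs of cells. -/
def biext (b : Cell n → Cell n → Ftot n k) (f g : Ftot n k) : Ftot n k :=
  ∑ e₁ ∈ f.support, ∑ e₂ ∈ g.support, (f e₁ * g e₂) • b e₁ e₂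

/-- The product of two basis cells, defined recursively (with fuel, which suffices as each
recursive step lowers the total degree): `1 ⋆ 1 = 1`, and for `p + q ≥ 1`,
`e₁ ⋆ e₂ = c((d e₁) ⋆ e₂) + (−1)^p c(e₁ ⋆ (d e₂))`. -/
def bstar : ℕ → Cell n → Cell n → Ftot n k
  | 0, _, _ => 0
  | N + 1, e₁, e₂ =>
    if cellDeg e₁ + cellDeg e₂ = 0 then Finsupp.single ((∅, ∅) : Cell n) 1
    else
      Cmap G k (biext k (fun a b => bstar N a b) (Dmap G k (Finsupp.single e₁ 1)) (Finsupp.single e₂ 1))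
      + ((-1 : MvPolynomial (Fin n) k) ^ cellDeg e₁) •
          Cmap G k (biext k (fun a b => bstar N a b) (Finsupp.single e₁ 1) (Dmap G k (Finsupp.single e₂ 1)))

/-- The product `⋆` on the resolution, extended `S`-bilinearly from basis cells. -/
def pstar (f g : Ftot n k) : Ftot n k := biext k (bstar G k (4 * n + 4)) f g

/-- The map `∂` on a basis cell: `∂[{i}|{j}] = x_i x_j`, and for `|σ|+|τ| ≥ 3`,
`∂[σ|τ] = x_{max τ}[σ|τ∖max τ] − (−1)^{|τ|+|σ|} x_{min σ}[σ∖min σ|τ]`. -/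
def partialCell (e : Cell n) : Ftot n k :=
  if IsBasisCell G e then
    if e.1.card + e.2.card = 2 then
      (∏ i ∈ e.1 ∪ e.2, (X i : MvPolynomial (Fin n) k)) • sym G k ((∅, ∅) : Cell n)
    else if 3 ≤ e.1.card + e.2.card then
      if h1 : e.1.Nonempty then
        if h2 : e.2.Nonempty then
          (X (e.2.max' h2) : MvPolynomial (Fin n) k) • sym G k (e.1, e.2.erase (e.2.max' h2))
          - ((-1 : MvPolynomial (Fin n) k) ^ (e.2.card + e.1.card)) •
              ((X (e.1.min' h1) : MvPolynomial (Fin n) k) •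
                sym G k (e.1.erase (e.1.min' h1), e.2))
        else 0
      else 0
    else 0
  else 0

/-- The map `∂`, as an `S`-linear endomorphism of the total module. -/
def Pmap : Ftot n k →ₗ[MvPolynomial (Fin n) k] Ftot n k :=
  Finsupp.lsum ℕ fun e => LinearMap.smulRight LinearMap.id (partialCell G k e)

/-- The `k`-linear projection `π` of `S` fixing each monomial not in `I_G` and
annihilating each monomial in `I_G`. -/
def piMap : MvPolynomial (Fin n) k →ₗ[k] MvPolynomial (Fin n) k :=
  (MvPolynomial.basisMonomials (Fin n) k).constr ℕ fun α =>
    if monomial α (1 : k) ∈ edgeIdeal G k then 0 else monomial α (1 : k)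

/-- The `ℕⁿ`-multidegree of the basis vector `x^α [σ|τ]`: `α + Σ_{i ∈ σ∪τ} eᵢ`. -/
def mdeg (e : Cell n) (α : Fin n →₀ ℕ) : Fin n →₀ ℕ :=
  α + ∑ i ∈ e.1 ∪ e.2, Finsupp.single i 1

/-- The `μ`-homogeneous component of the resolution (as a `k`-subspace). -/
def Hsub (μ : Fin n →₀ ℕ) : Submodule k (Ftot n k) :=
  Submodule.span k {f : Ftot n k |
    ∃ (e : Cell n) (α : Fin n →₀ ℕ), IsBasisCell G e ∧ mdeg e α = μ ∧
      f = Finsupp.single e (monomial α (1 : k))}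

/-!
The homotopy `c` moves one variable of the monomial `x^α` into the symbol `[σ|τ]` (a largest
index beyond `τ` into `τ`, or a smallest admissible index into `σ`), so it preserves the
multidegree. It squares to zero because the moved index is extremal: in every term of `c(x^α e)`
the sets `C₁` and (when `|τ| = 1`) `C₂` are empty, so `c` kills it. In degree `0` this uses the
cointerval structure: the right neighbours of a vertex form an upper set, so an index of `α`
beyond the chosen edge `[{s}|{t}]` would give a `≺`-smaller edge `[{s}|{i}]`.
-/

section Homotopy

variable {G k}

open Finset

lemma FBasis_apply (e : Cell n) (α : Fin n →₀ ℕ) :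
    FBasis n k ⟨e, α⟩ = single e (monomial α 1) := by
  simp [FBasis]

lemma Cmap_FBasis (p : (_ : Cell n) × (Fin n →₀ ℕ)) : Cmap G k (FBasis n k p) = cMono G k p.1 p.2 :=
  Module.Basis.constr_basis _ _ _ _

lemma Cmap_single_monomial (e : Cell n) (α : Fin n →₀ ℕ) :
    Cmap G k (single e (monomial α 1)) = cMono G k e α := by
  rw [← FBasis_apply, Cmap_FBasis]

lemma Cmap_monomial_smul_sym (β : Fin n →₀ ℕ) (e : Cell n) :
    Cmap G k (monomial β (1 : k) • sym G k e) = cMono G k e β := by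
  unfold sym
  split_ifs with he
  · rw [Finsupp.smul_single', mul_one, Cmap_single_monomial]
  · rw [smul_zero, map_zero, cMono, if_neg he]

lemma mem_C1set {τ : Finset (Fin n)} {α : Fin n →₀ ℕ} {i : Fin n} :
    i ∈ C1set τ α ↔ i ∈ α.support ∧ ∀ j ∈ τ, j < i :=
  mem_filter

lemma mem_C2set {σ τ : Finset (Fin n)} {α : Fin n →₀ ℕ} {i : Fin n} :
    i ∈ C2set G σ τ α ↔
      i ∈ α.support ∧ (∀ s ∈ σ, i < s) ∧ ∀ j ∈ τ, (∀ j' ∈ τ, j ≤ j') → G.Adj i j :=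
  mem_filter

lemma mem_C3set {σ : Finset (Fin n)} {α : Fin n →₀ ℕ} {i : Fin n} :
    i ∈ C3set G σ α ↔ i ∈ α.support ∧ (∀ s ∈ σ, i < s) ∧
      ∀ m ∈ α.support, (∀ m' ∈ α.support, m' ≤ m) → i < m ∧ G.Adj i m :=
  mem_filter

lemma mem_DvdSet {α : Fin n →₀ ℕ} {p : Fin n × Fin n} :
    p ∈ DvdSet G α ↔ p.1 < p.2 ∧ G.Adj p.1 p.2 ∧ p.1 ∈ α.support ∧ p.2 ∈ α.support := by
  simp [DvdSet, Nat.one_le_iff_ne_zero]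

lemma C1set_mono_support {τ : Finset (Fin n)} {α β : Fin n →₀ ℕ} (h : β.support ⊆ α.support) :
    C1set τ β ⊆ C1set τ α :=
  filter_subset_filter _ h

lemma IsBasisCell.nonempty_and_lt {σ τ : Finset (Fin n)} (hb : IsBasisCell G (σ, τ))
    (hτ : τ.Nonempty) : σ.Nonempty ∧ ∀ s ∈ σ, ∀ j ∈ τ, s < j := by
  obtain h | ⟨hσ, -, -, hlt, -⟩ := hb
  · simp_all
  · exact ⟨hσ, hlt⟩

lemma cMono_eq_zero {σ τ : Finset (Fin n)} {α : Fin n →₀ ℕ} (hτ : τ.Nonempty)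
    (h1 : C1set τ α = ∅) (h2 : τ.card = 1 → C2set G σ τ α = ∅) : cMono G k (σ, τ) α = 0 := by
  have hC1 : ¬ (C1set τ α).Nonempty := by simp [h1]
  by_cases hc : τ.card = 1
  · have hC2 : ¬ (C2set G σ τ α).Nonempty := by simp [h2 hc]
    simp [cMono, hτ, hc, hC1, hC2]
  · simp [cMono, hτ, hc, hC1]

lemma cMono_zero_right (e : Cell n) : cMono G k e 0 = 0 := by
  by_cases hb : IsBasisCell G e
  · have hD : ¬ (DvdSet G 0).Nonempty := by simp [Finset.Nonempty, mem_DvdSet]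
    simp [cMono, cZero, hb, hD, C1set, C2set]
  · rw [cMono, if_neg hb]

lemma neg_one_pow_smul_mem (N : Submodule k (Ftot n k)) (p : ℕ) {x : Ftot n k} (hx : x ∈ N) :
    (-1 : MvPolynomial (Fin n) k) ^ p • x ∈ N := by
  rcases neg_one_pow_eq_or (MvPolynomial (Fin n) k) p with h | h
  · simpa [h] using hx
  · simpa [h] using N.neg_mem hx

lemma cZero_eq_zero_or (α : Fin n →₀ ℕ) :
    cZero G k α = 0 ∨ ∃ s t, (s, t) ∈ DvdSet G α ∧ (∀ p ∈ DvdSet G α, p.2 ≤ t) ∧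
      (∀ p ∈ DvdSet G α, p.2 = t → s ≤ p.1) ∧
      cZero G k α = monomial (α - single s 1 - single t 1) (1 : k) • sym G k ({s}, {t}) := by
  unfold cZero
  dsimp only
  split_ifs with h h2
  · right
    set t := ((DvdSet G α).image Prod.snd).max' (h.image _)
    set s := (((DvdSet G α).filter fun p => p.2 = t).image Prod.fst).min' h2
    obtain ⟨p, hp, hps⟩ := mem_image.1 (min'_mem _ h2)
    refine ⟨s, t, ?_, fun q hq => le_max' _ _ (mem_image_of_mem _ hq),
      fun q hq hqt => min'_le _ _ (mem_image_of_mem _ (mem_filter.2 ⟨hq, hqt⟩)), rfl⟩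
    rw [mem_filter] at hp
    exact (show p = (s, t) from Prod.ext hps hp.2) ▸ hp.1
  all_goals exact Or.inl rfl

lemma cMono_mem_of_terms (N : Submodule k (Ftot n k)) {σ τ : Finset (Fin n)} {α : Fin n →₀ ℕ}
    (hb : IsBasisCell G (σ, τ)) (hzero : (σ, τ) = (∅, ∅) → cZero G k α ∈ N)
    (hC1 : τ.Nonempty → ∀ m₁, IsGreatest (C1set τ α : Set (Fin n)) m₁ →
      monomial (α - single m₁ 1) (1 : k) • sym G k (σ, insert m₁ τ) ∈ N)
    (hC3 : ∀ t m₁ m₃, τ = {t} → IsGreatest (C1set τ α : Set (Fin n)) m₁ →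
      IsLeast (C3set G σ α : Set (Fin n)) m₃ →
      monomial (α + single t 1 - single m₁ 1 - single m₃ 1) (1 : k) •
        sym G k (insert m₃ σ, {m₁}) ∈ N)
    (hC2 : ∀ t m₂, τ = {t} → C1set τ α = ∅ → IsLeast (C2set G σ τ α : Set (Fin n)) m₂ →
      monomial (α - single m₂ 1) (1 : k) • sym G k (insert m₂ σ, τ) ∈ N) :
    cMono G k (σ, τ) α ∈ N := by
  by_cases hτ : τ.Nonempty
  swap
  · have hστ : (σ, τ) = (∅, ∅) := hb.resolve_right fun h => hτ h.2.1
    simpa [cMono, hb, hτ] using hzero hστ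
  by_cases hc : τ.card = 1
  · obtain ⟨t, rfl⟩ := card_eq_one.1 hc
    by_cases h1 : (C1set {t} α).Nonempty
    · have hm₁ := hC1 hτ _ (isGreatest_max' _ h1)
      by_cases h3 : (C3set G σ α).Nonempty
      · simpa [cMono, hb, h1, h3] using N.add_mem hm₁ (neg_one_pow_smul_mem N (σ.card + 1)
          (hC3 t _ _ rfl (isGreatest_max' _ h1) (isLeast_min' _ h3)))
      · simpa [cMono, hb, h1, h3] using hm₁
    · rw [not_nonempty_iff_eq_empty] at h1
      by_cases h2 : (C2set G σ {t} α).Nonempty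
      · simpa [cMono, hb, h1, h2] using neg_one_pow_smul_mem N (σ.card + 1)
          (hC2 t _ rfl h1 (isLeast_min' _ h2))
      · simp [cMono, hb, h1, h2, N.zero_mem]
  · by_cases h1 : (C1set τ α).Nonempty
    · simpa [cMono, hb, hτ, hc, h1] using hC1 hτ _ (isGreatest_max' _ h1)
    · simp [cMono, hb, hτ, hc, h1, N.zero_mem]

def AdjUpwardClosed (G : SimpleGraph (Fin n)) : Prop :=
  ∀ ⦃i j l : Fin n⦄, i < j → j ≤ l → G.Adj i j → G.Adj i l

lemma cigraph_adjUpwardClosed {a b : Fin n → ℝ} (hab : ∀ i, a i ≤ b i)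
    (hmono : ∀ i j : Fin n, i < j → a i ≤ a j) : AdjUpwardClosed (cigraph n a b) := by
  rintro i j l hij hjl ⟨-, hdisj⟩
  have hbi : b i < a j :=
    not_le.1 fun h => Set.disjoint_left.1 hdisj ⟨hmono i j hij, h⟩ ⟨le_rfl, hab j⟩
  have hal : a j ≤ a l := hjl.eq_or_lt.elim (fun h => h ▸ le_rfl) (hmono j l)
  exact ⟨(hij.trans_le hjl).ne, Set.disjoint_left.2 fun x hx hx' =>
    (hx.2.trans_lt (hbi.trans_le hal)).not_ge hx'.1⟩

lemma cMono_insert_greatest_C1set_eq_zero {σ τ : Finset (Fin n)} {α : Fin n →₀ ℕ} {m₁ : Fin n}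
    (hτ : τ.Nonempty) (hm₁ : IsGreatest (C1set τ α : Set (Fin n)) m₁) :
    cMono G k (σ, insert m₁ τ) (α - single m₁ 1) = 0 := by
  have hm₁τ : m₁ ∉ τ := fun h => lt_irrefl _ ((mem_C1set.1 hm₁.1).2 m₁ h)
  refine cMono_eq_zero (insert_nonempty _ _) ?_ fun h => ?_
  · refine eq_empty_of_forall_notMem fun i hi => ?_
    rw [mem_C1set] at hi
    exact (hi.2 m₁ (mem_insert_self _ _)).not_ge (hm₁.2 (mem_C1set.2
      ⟨Finsupp.support_tsub hi.1, fun j hj => hi.2 j (mem_insert_of_mem hj)⟩))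
  · rw [card_insert_of_notMem hm₁τ] at h
    exact absurd h (by have := hτ.card_pos; omega)

lemma cMono_insert_least_C2set_eq_zero {σ τ : Finset (Fin n)} {α : Fin n →₀ ℕ} {m₂ : Fin n}
    (hτ : τ.Nonempty) (h1 : C1set τ α = ∅) (hm₂ : IsLeast (C2set G σ τ α : Set (Fin n)) m₂) :
    cMono G k (insert m₂ σ, τ) (α - single m₂ 1) = 0 := by
  refine cMono_eq_zero hτ (subset_empty.1 (h1 ▸ C1set_mono_support Finsupp.support_tsub))
    fun _ => eq_empty_of_forall_notMem fun i hi => ?_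
  obtain ⟨hiα, hiσ, hiτ⟩ := mem_C2set.1 hi
  exact (hiσ m₂ (mem_insert_self _ _)).not_ge (hm₂.2 (mem_C2set.2
    ⟨Finsupp.support_tsub hiα, fun s hs => hiσ s (mem_insert_of_mem hs), hiτ⟩))

lemma cMono_insert_least_C3set_eq_zero {σ : Finset (Fin n)} {α : Fin n →₀ ℕ} {t m₁ m₃ : Fin n}
    (hσ : σ.Nonempty) (hσt : ∀ s ∈ σ, s < t) (hm₁ : IsGreatest (C1set {t} α : Set (Fin n)) m₁)
    (hm₃ : IsLeast (C3set G σ α : Set (Fin n)) m₃) :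
    cMono G k (insert m₃ σ, {m₁}) (α + single t 1 - single m₁ 1 - single m₃ 1) = 0 := by
  obtain ⟨hm₁α, htm₁⟩ := mem_C1set.1 hm₁.1
  replace htm₁ : t < m₁ := htm₁ t (mem_singleton_self t)
  have hsupp : ∀ i ≠ t, i ∈ (α + single t 1 - single m₁ 1 - single m₃ 1).support →
      i ∈ α.support := fun i hit hi => by
    have := Finsupp.support_add (Finsupp.support_tsub (Finsupp.support_tsub hi))
    simpa [hit] using this
  have hmax : ∀ j ∈ α.support, j ≤ m₁ := fun j hj =>
    (le_or_gt j t).elim (fun h => (h.trans_lt htm₁).le)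
      fun h => hm₁.2 (mem_C1set.2 ⟨hj, by simpa using h⟩)
  refine cMono_eq_zero (singleton_nonempty _) ?_ fun _ => ?_ <;>
    refine eq_empty_of_forall_notMem fun i hi => ?_
  · obtain ⟨hi, hm₁i⟩ := mem_C1set.1 hi
    replace hm₁i := hm₁i m₁ (mem_singleton_self _)
    exact hm₁i.not_ge (hmax i (hsupp i (htm₁.trans hm₁i).ne' hi))
  · obtain ⟨hi, hiσ, hiadj⟩ := mem_C2set.1 hi
    obtain ⟨s, hs⟩ := hσ
    have hit : i < t := (hiσ s (mem_insert_of_mem hs)).trans (hσt s hs)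
    refine (hiσ m₃ (mem_insert_self _ _)).not_ge (hm₃.2 (mem_C3set.2 ⟨hsupp i hit.ne hi,
      fun s hs => hiσ s (mem_insert_of_mem hs), fun j hj hjmax => ?_⟩))
    obtain rfl : j = m₁ := le_antisymm (hmax j hj) (hjmax m₁ hm₁α)
    exact ⟨hit.trans htm₁, hiadj j (mem_singleton_self _) (by simp)⟩

lemma Cmap_cZero_eq_zero (hG : AdjUpwardClosed G) (α : Fin n →₀ ℕ) :
    Cmap G k (cZero G k α) = 0 := by
  obtain h | ⟨s, t, hst, htmax, hsmin, h⟩ := cZero_eq_zero_or (G := G) (k := k) α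
  · rw [h, map_zero]
  rw [h, Cmap_monomial_smul_sym]
  obtain ⟨hst, hadj, hs, ht⟩ := mem_DvdSet.1 hst
  refine cMono_eq_zero (singleton_nonempty t) ?_ fun _ => ?_ <;>
    refine eq_empty_of_forall_notMem fun i hi => ?_
  · obtain ⟨hi, hti⟩ := mem_C1set.1 hi
    replace hti := hti t (mem_singleton_self t)
    exact hti.not_ge (htmax (s, i) (mem_DvdSet.2 ⟨hst.trans hti, hG hst hti.le hadj, hs,
      Finsupp.support_tsub (Finsupp.support_tsub hi)⟩))
  · obtain ⟨hi, his, hit⟩ := mem_C2set.1 hi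
    replace his := his s (mem_singleton_self s)
    exact his.not_ge (hsmin (i, t) (mem_DvdSet.2 ⟨his.trans hst,
      hit t (mem_singleton_self t) (by simp), Finsupp.support_tsub (Finsupp.support_tsub hi),
      ht⟩) rfl)

theorem Cmap_cMono_eq_zero (hG : AdjUpwardClosed G) (e : Cell n) (α : Fin n →₀ ℕ) :
    Cmap G k (cMono G k e α) = 0 := by
  obtain ⟨σ, τ⟩ := e
  by_cases hb : IsBasisCell G (σ, τ)
  swap
  · rw [cMono, if_neg hb, map_zero]
  refine LinearMap.mem_ker.1 (cMono_mem_of_terms _ hb (fun _ => Cmap_cZero_eq_zero hG α) ?_ ?_ ?_)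
  · intro hτ m₁ hm₁
    rw [LinearMap.mem_ker, Cmap_monomial_smul_sym, cMono_insert_greatest_C1set_eq_zero hτ hm₁]
  · rintro t m₁ m₃ rfl hm₁ hm₃
    obtain ⟨hσ, hσt⟩ := hb.nonempty_and_lt (singleton_nonempty t)
    rw [LinearMap.mem_ker, Cmap_monomial_smul_sym, cMono_insert_least_C3set_eq_zero hσ
      (fun s hs => hσt s hs t (mem_singleton_self t)) hm₁ hm₃]
  · rintro t m₂ rfl h1 hm₂
    rw [LinearMap.mem_ker, Cmap_monomial_smul_sym,
      cMono_insert_least_C2set_eq_zero (singleton_nonempty t) h1 hm₂]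

theorem Cmap_comp_Cmap (hG : AdjUpwardClosed G) : Cmap G k ∘ₗ Cmap G k = 0 :=
  (FBasis n k).ext fun p => by
    rw [LinearMap.comp_apply, Cmap_FBasis, Cmap_cMono_eq_zero hG, LinearMap.zero_apply]

lemma mdeg_of_union_eq_insert {e e' : Cell n} {x : Fin n} (hx : x ∉ e.1 ∪ e.2)
    (h : e'.1 ∪ e'.2 = insert x (e.1 ∪ e.2)) (α : Fin n →₀ ℕ) :
    mdeg e' α = mdeg e (α + single x 1) := by
  rw [mdeg, mdeg, h, sum_insert hx, add_assoc]

lemma mdeg_tsub_single_of_union_eq_insert {e e' : Cell n} {x : Fin n} (hx : x ∉ e.1 ∪ e.2)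
    (h : e'.1 ∪ e'.2 = insert x (e.1 ∪ e.2)) {α : Fin n →₀ ℕ} (hα : x ∈ α.support) :
    mdeg e' (α - single x 1) = mdeg e α := by
  rw [mdeg_of_union_eq_insert hx h, tsub_add_cancel_of_le (Finsupp.single_le_iff.2
    (Nat.one_le_iff_ne_zero.2 (Finsupp.mem_support_iff.1 hα)))]

lemma mdeg_insert_least_C3set {σ : Finset (Fin n)} {α : Fin n →₀ ℕ} {t m₁ m₃ : Fin n}
    (hm₁ : m₁ ∈ α.support) (hm₃ : m₃ ∈ α.support) (hm₃₁ : m₃ ≠ m₁)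
    (hm₁σ : m₁ ∉ σ) (hm₃σ : m₃ ∉ σ) (htσ : t ∉ σ) :
    mdeg (insert m₃ σ, {m₁}) (α + single t 1 - single m₁ 1 - single m₃ 1) = mdeg (σ, {t}) α :=
  calc _ = mdeg (σ, {m₁}) (α + single t 1 - single m₁ 1) :=
        mdeg_tsub_single_of_union_eq_insert (by simp [hm₃σ, hm₃₁]) (insert_union _ _ _)
          (by simp only [Finsupp.mem_support_iff, Finsupp.tsub_apply, Finsupp.add_apply,
            Finsupp.single_apply, if_neg hm₃₁.symm] at hm₃ ⊢; omega)
    _ = mdeg (σ, ∅) (α + single t 1) :=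
        mdeg_tsub_single_of_union_eq_insert (by simpa using hm₁σ) (by simp)
          (by simp only [Finsupp.mem_support_iff, Finsupp.add_apply] at hm₁ ⊢; omega)
    _ = mdeg (σ, {t}) α := (mdeg_of_union_eq_insert (by simpa using htσ) (by simp) α).symm

lemma monomial_smul_sym_mem_Hsub {e : Cell n} {β μ : Fin n →₀ ℕ} (h : mdeg e β = μ) :
    monomial β (1 : k) • sym G k e ∈ Hsub G k μ := by
  unfold sym
  split_ifs with he
  · rw [Finsupp.smul_single', mul_one]
    exact Submodule.subset_span ⟨e, β, he, h, rfl⟩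
  · rw [smul_zero]
    exact zero_mem _

lemma cZero_mem_Hsub (α : Fin n →₀ ℕ) : cZero G k α ∈ Hsub G k (mdeg (∅, ∅) α) := by
  obtain h | ⟨s, t, hst, -, -, h⟩ := cZero_eq_zero_or (G := G) (k := k) α
  · exact h ▸ zero_mem _
  obtain ⟨hst, -, hs, ht⟩ := mem_DvdSet.1 hst
  refine h ▸ monomial_smul_sym_mem_Hsub ?_
  calc mdeg ({s}, {t}) (α - single s 1 - single t 1) = mdeg ({s}, ∅) (α - single s 1) :=
        mdeg_tsub_single_of_union_eq_insert (by simp [hst.ne']) (by ext; simp [or_comm])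
          (by simpa [Finsupp.single_apply, hst.ne] using ht)
    _ = mdeg (∅, ∅) α := mdeg_tsub_single_of_union_eq_insert (by simp) (by simp) hs

theorem cMono_mem_Hsub (e : Cell n) (α : Fin n →₀ ℕ) : cMono G k e α ∈ Hsub G k (mdeg e α) := by
  obtain ⟨σ, τ⟩ := e
  by_cases hb : IsBasisCell G (σ, τ)
  swap
  · rw [cMono, if_neg hb]
    exact zero_mem _
  refine cMono_mem_of_terms _ hb (fun h => h ▸ cZero_mem_Hsub α) ?_ ?_ ?_
  · intro hτ m₁ hm₁
    obtain ⟨hm₁α, hτm₁⟩ := mem_C1set.1 hm₁.1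
    obtain ⟨-, hστ⟩ := hb.nonempty_and_lt hτ
    obtain ⟨t, ht⟩ := hτ
    refine monomial_smul_sym_mem_Hsub
      (mdeg_tsub_single_of_union_eq_insert ?_ (union_insert _ _ _) hm₁α)
    rw [mem_union, not_or]
    exact ⟨fun h => ((hστ m₁ h t ht).trans (hτm₁ t ht)).false, fun h => (hτm₁ m₁ h).false⟩
  · rintro t m₁ m₃ rfl hm₁ hm₃
    obtain ⟨⟨s, hs⟩, hσt⟩ := hb.nonempty_and_lt (singleton_nonempty t)
    simp only [mem_singleton, forall_eq] at hσt
    obtain ⟨hm₁α, htm₁⟩ := mem_C1set.1 hm₁.1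
    simp only [mem_singleton, forall_eq] at htm₁
    obtain ⟨hm₃α, hm₃σ, -⟩ := mem_C3set.1 hm₃.1
    exact monomial_smul_sym_mem_Hsub (mdeg_insert_least_C3set hm₁α hm₃α
      ((hm₃σ s hs).trans ((hσt s hs).trans htm₁)).ne
      (fun h => ((hσt m₁ h).trans htm₁).false) (fun h => (hm₃σ m₃ h).false)
      (fun h => (hσt t h).false))
  · rintro t m₂ rfl - hm₂
    obtain ⟨⟨s, hs⟩, hσt⟩ := hb.nonempty_and_lt (singleton_nonempty t)
    obtain ⟨hm₂α, hm₂σ, -⟩ := mem_C2set.1 hm₂.1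
    refine monomial_smul_sym_mem_Hsub
      (mdeg_tsub_single_of_union_eq_insert ?_ (insert_union _ _ _) hm₂α)
    rw [mem_union, mem_singleton, not_or]
    exact ⟨fun h => (hm₂σ m₂ h).false,
      fun h => ((hm₂σ s hs).trans (hσt s hs t (mem_singleton_self t))).ne h⟩

theorem Hsub_le_comap_Cmap (μ : Fin n →₀ ℕ) : Hsub G k μ ≤ (Hsub G k μ).comap (Cmap G k) :=
  Submodule.span_le.2 fun _ ⟨e, α, _, hμ, hf⟩ => by
    rw [SetLike.mem_coe, Submodule.mem_comap, hf, Cmap_single_monomial, ← hμ]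
    exact cMono_mem_Hsub e α

end Homotopy

theorem stmt5_general (n : ℕ) (a b : Fin n → ℝ)
    (hab : ∀ i, a i ≤ b i) (hmono : ∀ i j : Fin n, i < j → a i ≤ a j)
    (k : Type) [Field k] :
    (∀ d : ℕ, ∀ f ∈ Fsub (cigraph n a b) k d, Cmap (cigraph n a b) k (Cmap (cigraph n a b) k f) = 0)
    ∧ (∀ e : Cell n, IsBasisCell (cigraph n a b) e → Cmap (cigraph n a b) k (Finsupp.single e 1) = 0)
    ∧ ∀ μ : Fin n →₀ ℕ, ∀ f ∈ Hsub (cigraph n a b) k μ, Cmap (cigraph n a b) k f ∈ Hsub (cigraph n a b) k μ := by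
  refine ⟨fun _ f _ => ?_, fun e _ => ?_, fun μ _ hf => Hsub_le_comap_Cmap μ hf⟩
  · exact LinearMap.congr_fun (Cmap_comp_Cmap (cigraph_adjUpwardClosed hab hmono)) f
  · rw [← C_1, ← monomial_zero', Cmap_single_monomial, cMono_zero_right]

theorem stmt5 (n : ℕ) (hn : 1 ≤ n) (a b : Fin n → ℝ)
    (hab : ∀ i, a i ≤ b i) (hmono : ∀ i j : Fin n, i < j → a i ≤ a j)
    (k : Type) [Field k] :
    (∀ d : ℕ, ∀ f ∈ Fsub (cigraph n a b) k d, Cmap (cigraph n a b) k (Cmap (cigraph n a b) k f) = 0)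
    ∧ (∀ e : Cell n, IsBasisCell (cigraph n a b) e → Cmap (cigraph n a b) k (Finsupp.single e 1) = 0)
    ∧ ∀ μ : Fin n →₀ ℕ, ∀ f ∈ Hsub (cigraph n a b) k μ, Cmap (cigraph n a b) k f ∈ Hsub (cigraph n a b) k μ :=
  stmt5_general n a b hab hmono k

end EdgeRes
end
end

section
/- The product ⋆ is graded commutative: for all f ∈ F_p and g ∈ F_q, f ⋆ g = (−1)^{pq} g ⋆ f. -/
open Classical MvPolynomial Finsupp TensorProduct

set_option maxHeartbeats 1600000

noncomputable section

namespace EdgeRes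

variable {n : ℕ}

variable (G : SimpleGraph (Fin n)) (k : Type) [Field k]

/-! The recursion defining `⋆` is symmetric up to sign: exchanging the factors of
`e₁ ⋆ e₂ = c((d e₁) ⋆ e₂) + (−1)^p c(e₁ ⋆ (d e₂))` and applying graded commutativity in lower
degree turns the two summands into those of `(−1)^{pq} e₂ ⋆ e₁`, because `d` lowers the degree by
one and `c` commutes with signs, while `(−1)^{(p−1)q} = (−1)^{pq+q}` and `(−1)^{p+p(q−1)} = (−1)^{pq}`.
Induction on the recursion depth gives graded commutativity on cells, and bilinearity extends it. -/

def IsGradedComm (m : Cell n → Cell n → Ftot n k) : Prop :=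
  ∀ e₁ e₂, m e₁ e₂ = ((-1 : MvPolynomial (Fin n) k) ^ (cellDeg e₁ * cellDeg e₂)) • m e₂ e₁

variable {k} in
lemma biext_comm {m : Cell n → Cell n → Ftot n k} (hm : IsGradedComm k m) {f g : Ftot n k}
    {s : MvPolynomial (Fin n) k}
    (hs : ∀ x ∈ f.support, ∀ y ∈ g.support,
      ((-1 : MvPolynomial (Fin n) k) ^ (cellDeg x * cellDeg y)) = s) :
    biext k m f g = s • biext k m g f := by
  unfold biext
  rw [Finset.sum_comm (s := g.support), Finset.smul_sum]
  refine Finset.sum_congr rfl fun x hx => ?_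
  rw [Finset.smul_sum]
  refine Finset.sum_congr rfl fun y hy => ?_
  rw [hm, hs x hx y hy, smul_smul, smul_smul, mul_comm (f x), mul_comm]

lemma sym_mem_supported {s : Set (Cell n)} {e : Cell n} (he : e ∈ s) :
    sym G k e ∈ Finsupp.supported (MvPolynomial (Fin n) k) (MvPolynomial (Fin n) k) s := by
  unfold sym
  split_ifs
  · exact Finsupp.single_mem_supported _ _ he
  · exact zero_mem _

lemma diffCell_mem_supported (e : Cell n) :
    diffCell G k e ∈ Finsupp.supported (MvPolynomial (Fin n) k) (MvPolynomial (Fin n) k)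
      {a | cellDeg a + 1 = cellDeg e} := by
  unfold diffCell
  split_ifs with _ hcard₂ hcard₃
  · refine Submodule.smul_mem _ _ (sym_mem_supported G k ?_)
    simp only [Set.mem_ofPred_eq, cellDeg, Finset.card_empty]
    omega
  · refine add_mem (sum_mem fun i hi => Submodule.smul_mem _ _ (sym_mem_supported G k ?_))
      (sum_mem fun i hi => Submodule.smul_mem _ _ (sym_mem_supported G k ?_))
    all_goals
      simp only [Set.mem_ofPred_eq, cellDeg, Finset.card_erase_of_mem hi]
      have := Finset.card_pos.mpr ⟨i, hi⟩
      omega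
  all_goals exact zero_mem _

lemma Dmap_single (e : Cell n) : Dmap G k (Finsupp.single e 1) = diffCell G k e := by
  simp [Dmap]

lemma Cmap_neg_one_pow_smul (m : ℕ) (x : Ftot n k) :
    Cmap G k (((-1 : MvPolynomial (Fin n) k) ^ m) • x)
      = ((-1 : MvPolynomial (Fin n) k) ^ m) • Cmap G k x := by
  rcases neg_one_pow_eq_or (MvPolynomial (Fin n) k) m with h | h <;> simp [h]

lemma bstar_succ (N : ℕ) {e₁ e₂ : Cell n} (h : cellDeg e₁ + cellDeg e₂ ≠ 0) :
    bstar G k (N + 1) e₁ e₂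
      = Cmap G k (biext k (bstar G k N) (diffCell G k e₁) (Finsupp.single e₂ 1))
        + ((-1 : MvPolynomial (Fin n) k) ^ cellDeg e₁) •
          Cmap G k (biext k (bstar G k N) (Finsupp.single e₁ 1) (diffCell G k e₂)) := by
  rw [bstar, if_neg h, Dmap_single, Dmap_single]

lemma isGradedComm_bstar (N : ℕ) : IsGradedComm k (bstar G k N) := by
  induction N with
  | zero => intro e₁ e₂; simp [bstar]
  | succ N ih =>
    intro e₁ e₂
    by_cases h0 : cellDeg e₁ + cellDeg e₂ = 0
    · simp [bstar, show cellDeg e₁ = 0 by omega, show cellDeg e₂ = 0 by omega]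
    rw [bstar_succ G k N h0, bstar_succ G k N (by omega)]
    have hd₁ := (Finsupp.mem_supported _ _).1 (diffCell_mem_supported G k e₁)
    have hd₂ := (Finsupp.mem_supported _ _).1 (diffCell_mem_supported G k e₂)
    generalize hp : cellDeg e₁ = p at *
    generalize hq : cellDeg e₂ = q at *
    have hleft : biext k (bstar G k N) (diffCell G k e₁) (Finsupp.single e₂ 1)
        = ((-1 : MvPolynomial (Fin n) k) ^ (p * q + q)) •
          biext k (bstar G k N) (Finsupp.single e₂ 1) (diffCell G k e₁) := by
      refine biext_comm ih fun x hx y hy => ?_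
      rw [Finset.mem_singleton.1 (Finsupp.support_single_subset hy), hq,
        ← show cellDeg x + 1 = p from hd₁ hx]
      exact neg_one_pow_congr (by simp only [Nat.even_add, Nat.even_mul, Nat.even_add_one]; tauto)
    have hright : biext k (bstar G k N) (Finsupp.single e₁ 1) (diffCell G k e₂)
        = ((-1 : MvPolynomial (Fin n) k) ^ (p * q + p)) •
          biext k (bstar G k N) (diffCell G k e₂) (Finsupp.single e₁ 1) := by
      refine biext_comm ih fun x hx y hy => ?_
      rw [Finset.mem_singleton.1 (Finsupp.support_single_subset hx), hp,
        ← show cellDeg y + 1 = q from hd₂ hy]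
      exact neg_one_pow_congr (by simp only [Nat.even_add, Nat.even_mul, Nat.even_add_one]; tauto)
    have hsign : (-1 : MvPolynomial (Fin n) k) ^ (p + (p * q + p)) = (-1) ^ (p * q) :=
      neg_one_pow_congr (by simp only [Nat.even_add, Nat.even_mul]; tauto)
    rw [hleft, hright, Cmap_neg_one_pow_smul, Cmap_neg_one_pow_smul, smul_add, smul_smul,
      smul_smul, ← pow_add, ← pow_add, hsign, add_comm]

lemma Fsub_le_supported (d : ℕ) :
    Fsub G k d ≤ Finsupp.supported (MvPolynomial (Fin n) k) (MvPolynomial (Fin n) k)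
      {a | cellDeg a = d} :=
  Submodule.span_le.2 fun _ ⟨_, he, hf⟩ => hf ▸ Finsupp.single_mem_supported _ _ he.2

theorem stmt8_general (n : ℕ) (a b : Fin n → ℝ)
    (k : Type) [Field k]
    (p q : ℕ) (f g : Ftot n k)
    (hf : f ∈ Fsub (cigraph n a b) k p) (hg : g ∈ Fsub (cigraph n a b) k q) :
    pstar (cigraph n a b) k f g = ((-1 : MvPolynomial (Fin n) k) ^ (p * q)) • pstar (cigraph n a b) k g f := by
  have hf' := (Finsupp.mem_supported _ _).1 (Fsub_le_supported _ k p hf)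
  have hg' := (Finsupp.mem_supported _ _).1 (Fsub_le_supported _ k q hg)
  exact biext_comm (isGradedComm_bstar _ k _) fun x hx y hy => by
    rw [show cellDeg x = p from hf' hx, show cellDeg y = q from hg' hy]

theorem stmt8 (n : ℕ) (hn : 1 ≤ n) (a b : Fin n → ℝ)
    (hab : ∀ i, a i ≤ b i) (hmono : ∀ i j : Fin n, i < j → a i ≤ a j)
    (k : Type) [Field k]
    (p q : ℕ) (f g : Ftot n k)
    (hf : f ∈ Fsub (cigraph n a b) k p) (hg : g ∈ Fsub (cigraph n a b) k q) :
    pstar (cigraph n a b) k f g = ((-1 : MvPolynomial (Fin n) k) ^ (p * q)) • pstar (cigraph n a b) k g f :=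
  stmt8_general n a b k p q f g hf hg

end EdgeRes
end
end
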